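/- arXiv:2404.11354 — 6 statements merged into one kernel-verified Lean document; each statement's English description precedes it below -/
import Mathlib

section
/- For every agent i, every time t ≥ 0 and every θ_m ∈ Θ, the beliefs generated by the fractional Bayesian update with uniform prior satisfy the closed-form identity log(q_i^{(t+1)}(θ_m)/q_i^{(t+1)}(θ_*)) = ∑_{j=1}^{N} ∑_{s=0}^{t} (W^{t+1−s})_{ij} · α^{(s)} · log(ℓ_{j,s}(θ_m)/ℓ_{j,s}(θ_*)), where (W^{τ})_{ij} denotes the (i,j) entry of the τ-th power of W. Consequently, when W is doubly stochastic, (1/N)∑_{i=1}^{N} log(q_i^{(t+1)}(θ_m)/q_i^{(t+1)}(θ_*)) = (1/N)∑_{j=1}^{N} ∑_{s=0}^{t} α^{(s)} log(ℓ_{j,s}(θ_m)/ℓ_{j,s}(θ_*)). -/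
open Filter

/-- Closed-form identity for the log-belief ratios generated by the
distributed fractional Bayesian update with uniform prior, and its network average
under double stochasticity of `W`. -/
theorem stmt2 (N M : ℕ) (hN : 0 < N) (hM : 0 < M)
    (tstar : Fin M)                                  -- the true parameter θ_*
    (W : Matrix (Fin N) (Fin N) ℝ)
    (hWnonneg : ∀ i j, 0 ≤ W i j)
    (hWrow : ∀ i, ∑ j, W i j = 1)
    (hWcol : ∀ j, ∑ i, W i j = 1)
    (α : ℕ → ℝ) (hα : ∀ t, 0 < α t ∧ α t < 1)
    (ℓ : Fin N → ℕ → Fin M → ℝ) (hℓ : ∀ j t m, 0 < ℓ j t m)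
    (q b : ℕ → Fin N → Fin M → ℝ)
    (hq0 : ∀ i m, q 0 i m = 1 / M)
    (hb : ∀ t i m, b t i m =
      ℓ i t m ^ α t * q t i m / ∑ θ, ℓ i t θ ^ α t * q t i θ)
    (hq : ∀ t i m, q (t + 1) i m =
      Real.exp (∑ j, W i j * Real.log (b t j m)) /
        ∑ θ, Real.exp (∑ j, W i j * Real.log (b t j θ))) :
    (∀ (t : ℕ) (i : Fin N) (m : Fin M),
      Real.log (q (t + 1) i m / q (t + 1) i tstar) =
        ∑ j, ∑ s ∈ Finset.range (t + 1),
          (W ^ (t + 1 - s)) i j * (α s * Real.log (ℓ j s m / ℓ j s tstar))) ∧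
    (∀ (t : ℕ) (m : Fin M),
      (1 / (N : ℝ)) * ∑ i, Real.log (q (t + 1) i m / q (t + 1) i tstar) =
        (1 / (N : ℝ)) * ∑ j, ∑ s ∈ Finset.range (t + 1),
          α s * Real.log (ℓ j s m / ℓ j s tstar)) := by
  haveI : Nonempty (Fin M) := Fin.pos_iff_nonempty.mp hM
  -- positivity of beliefs
  have hqpos : ∀ t i m, 0 < q t i m := by
    intro t
    induction t with
    | zero =>
      intro i m; rw [hq0]
      have : (0:ℝ) < M := by exact_mod_cast hM
      positivity
    | succ t ih =>
      intro i m
      rw [hq]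
      exact div_pos (Real.exp_pos _)
        (Finset.sum_pos (fun θ _ => Real.exp_pos _) Finset.univ_nonempty)
  -- column sums of powers of W are 1
  have hcol : ∀ (n : ℕ) (j : Fin N), ∑ i, (W ^ n) i j = 1 := by
    intro n
    induction n with
    | zero => intro j; simp [Matrix.one_apply]
    | succ n ih =>
      intro j
      have hmul : ∀ i, (W ^ (n+1)) i j = ∑ k, (W ^ n) i k * W k j := by
        intro i; rw [pow_succ]; rfl
      simp only [hmul]
      rw [Finset.sum_comm]
      simp only [← Finset.sum_mul, ih, one_mul]
      exact hWcol j
  -- one-step recursion for the log-ratio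
  have key : ∀ t i m, Real.log (q (t+1) i m) - Real.log (q (t+1) i tstar) =
      ∑ j, W i j * (α t * Real.log (ℓ j t m / ℓ j t tstar)
        + (Real.log (q t j m) - Real.log (q t j tstar))) := by
    intro t i m
    have hD : (0:ℝ) < ∑ θ, Real.exp (∑ j, W i j * Real.log (b t j θ)) :=
      Finset.sum_pos (fun θ _ => Real.exp_pos _) Finset.univ_nonempty
    rw [hq, hq, Real.log_div (Real.exp_pos _).ne' hD.ne',
        Real.log_div (Real.exp_pos _).ne' hD.ne', Real.log_exp, Real.log_exp,
        sub_sub_sub_cancel_right, ← Finset.sum_sub_distrib]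
    apply Finset.sum_congr rfl
    intro j _
    rw [← mul_sub]
    congr 1
    have hden : (0:ℝ) < ∑ θ, ℓ j t θ ^ α t * q t j θ :=
      Finset.sum_pos (fun θ _ =>
        mul_pos (Real.rpow_pos_of_pos (hℓ j t θ) _) (hqpos t j θ))
        Finset.univ_nonempty
    have hm : (0:ℝ) < ℓ j t m ^ α t := Real.rpow_pos_of_pos (hℓ j t m) _
    have hs : (0:ℝ) < ℓ j t tstar ^ α t := Real.rpow_pos_of_pos (hℓ j t tstar) _
    rw [hb, hb,
        Real.log_div (mul_pos hm (hqpos t j m)).ne' hden.ne',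
        Real.log_div (mul_pos hs (hqpos t j tstar)).ne' hden.ne',
        sub_sub_sub_cancel_right,
        Real.log_mul hm.ne' (hqpos t j m).ne',
        Real.log_mul hs.ne' (hqpos t j tstar).ne',
        Real.log_rpow (hℓ j t m), Real.log_rpow (hℓ j t tstar),
        Real.log_div (hℓ j t m).ne' (hℓ j t tstar).ne']
    ring
  -- closed form
  have main : ∀ t i m, Real.log (q (t+1) i m) - Real.log (q (t+1) i tstar) =
      ∑ j, ∑ s ∈ Finset.range (t + 1),
        (W ^ (t + 1 - s)) i j * (α s * Real.log (ℓ j s m / ℓ j s tstar)) := by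
    intro t
    induction t with
    | zero =>
      intro i m
      rw [key]
      simp [hq0, Finset.sum_range_one, pow_one]
    | succ t ih =>
      intro i m
      rw [key]
      have expand : ∀ j : Fin N,
          W i j * (α (t+1) * Real.log (ℓ j (t+1) m / ℓ j (t+1) tstar)
            + (Real.log (q (t+1) j m) - Real.log (q (t+1) j tstar)))
          = W i j * (α (t+1) * Real.log (ℓ j (t+1) m / ℓ j (t+1) tstar))
            + ∑ k, ∑ s ∈ Finset.range (t + 1),
                W i j * ((W ^ (t + 1 - s)) j k
                  * (α s * Real.log (ℓ k s m / ℓ k s tstar))) := by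
        intro j
        rw [ih j m, mul_add]
        congr 1
        rw [Finset.mul_sum]
        apply Finset.sum_congr rfl
        intro k _
        rw [Finset.mul_sum]
      simp only [expand]
      rw [Finset.sum_add_distrib]
      -- second piece
      have hswap : (∑ j, ∑ k, ∑ s ∈ Finset.range (t + 1),
            W i j * ((W ^ (t + 1 - s)) j k
              * (α s * Real.log (ℓ k s m / ℓ k s tstar))))
          = ∑ k, ∑ s ∈ Finset.range (t + 1),
              (W ^ (t + 2 - s)) i k * (α s * Real.log (ℓ k s m / ℓ k s tstar)) := by
        rw [Finset.sum_comm]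
        apply Finset.sum_congr rfl
        intro k _
        rw [Finset.sum_comm]
        apply Finset.sum_congr rfl
        intro s hs
        have hsle : s ≤ t := Nat.lt_succ_iff.mp (Finset.mem_range.mp hs)
        have hpow : (W ^ (t + 2 - s)) i k = ∑ j, W i j * (W ^ (t + 1 - s)) j k := by
          have : t + 2 - s = (t + 1 - s) + 1 := by omega
          rw [this, pow_succ']
          rfl
        rw [hpow, Finset.sum_mul]
        apply Finset.sum_congr rfl
        intro j _
        ring
      rw [hswap]
      -- RHS: peel off s = t+1
      have hrhs : (∑ j, ∑ s ∈ Finset.range (t + 1 + 1),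
            (W ^ (t + 1 + 1 - s)) i j * (α s * Real.log (ℓ j s m / ℓ j s tstar)))
          = (∑ j, ∑ s ∈ Finset.range (t + 1),
              (W ^ (t + 2 - s)) i j * (α s * Real.log (ℓ j s m / ℓ j s tstar)))
            + ∑ j, W i j * (α (t+1) * Real.log (ℓ j (t+1) m / ℓ j (t+1) tstar)) := by
        rw [← Finset.sum_add_distrib]
        apply Finset.sum_congr rfl
        intro j _
        rw [Finset.sum_range_succ, show t + 1 + 1 - (t + 1) = 1 by omega, pow_one]
      rw [hrhs]
      ring
  have h1 : ∀ (t : ℕ) (i : Fin N) (m : Fin M),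
      Real.log (q (t + 1) i m / q (t + 1) i tstar) =
        ∑ j, ∑ s ∈ Finset.range (t + 1),
          (W ^ (t + 1 - s)) i j * (α s * Real.log (ℓ j s m / ℓ j s tstar)) := by
    intro t i m
    rw [Real.log_div (hqpos (t+1) i m).ne' (hqpos (t+1) i tstar).ne']
    exact main t i m
  refine ⟨h1, ?_⟩
  intro t m
  congr 1
  calc (∑ i, Real.log (q (t + 1) i m / q (t + 1) i tstar))
      = ∑ i, ∑ j, ∑ s ∈ Finset.range (t + 1),
          (W ^ (t + 1 - s)) i j * (α s * Real.log (ℓ j s m / ℓ j s tstar)) := by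
        exact Finset.sum_congr rfl fun i _ => h1 t i m
    _ = ∑ j, ∑ s ∈ Finset.range (t + 1),
          (∑ i, (W ^ (t + 1 - s)) i j) * (α s * Real.log (ℓ j s m / ℓ j s tstar)) := by
        rw [Finset.sum_comm]
        refine Finset.sum_congr rfl fun j _ => ?_
        rw [Finset.sum_comm]
        exact Finset.sum_congr rfl fun s _ => (Finset.sum_mul _ _ _).symm
    _ = ∑ j, ∑ s ∈ Finset.range (t + 1),
          α s * Real.log (ℓ j s m / ℓ j s tstar) := by
        simp [hcol]
end

section
/- Suppose the log-likelihood ratios are uniformly bounded: there is B > 0 with |log(ℓ_{j,s}(θ')/ℓ_{j,s}(θ''))| < B for all agents j, times s and all θ', θ'' ∈ Θ. Then for every agent i, every t ≥ 0 and every θ_m ∈ Θ, the beliefs generated by the fractional Bayesian update with uniform prior satisfy |log(q_i^{(t+1)}(θ_m)/q_i^{(t+1)}(θ_*)) − (1/N)∑_{k=1}^{N} log(q_k^{(t+1)}(θ_m)/q_k^{(t+1)}(θ_*))| ≤ N·B·∑_{s=0}^{t} α^{(s)} · max_{j} |(W^{t+1−s})_{ij} − 1/N|. -/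
open Filter

/-- If the log-likelihood ratios are uniformly bounded by `B`, then the
deviation of each agent's log-belief ratio from the network average is bounded by
`N·B·∑_{s=0}^{t} α s · max_j |(W^{t+1−s})_{ij} − 1/N|`. -/
theorem stmt3 (N M : ℕ) (hN : 0 < N) (hM : 0 < M)
    (tstar : Fin M)                                  -- the true parameter θ_*
    (W : Matrix (Fin N) (Fin N) ℝ)
    (hWnonneg : ∀ i j, 0 ≤ W i j)
    (hWrow : ∀ i, ∑ j, W i j = 1)
    (hWcol : ∀ j, ∑ i, W i j = 1)
    (α : ℕ → ℝ) (hα : ∀ t, 0 < α t ∧ α t < 1)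
    (ℓ : Fin N → ℕ → Fin M → ℝ) (hℓ : ∀ j t m, 0 < ℓ j t m)
    (B : ℝ) (hB : 0 < B)
    (hbound : ∀ (j : Fin N) (s : ℕ) (θ' θ'' : Fin M),
      |Real.log (ℓ j s θ' / ℓ j s θ'')| < B)
    (q b : ℕ → Fin N → Fin M → ℝ)
    (hq0 : ∀ i m, q 0 i m = 1 / M)
    (hb : ∀ t i m, b t i m =
      ℓ i t m ^ α t * q t i m / ∑ θ, ℓ i t θ ^ α t * q t i θ)
    (hq : ∀ t i m, q (t + 1) i m =
      Real.exp (∑ j, W i j * Real.log (b t j m)) /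
        ∑ θ, Real.exp (∑ j, W i j * Real.log (b t j θ))) :
    ∀ (t : ℕ) (i : Fin N) (m : Fin M),
      |Real.log (q (t + 1) i m / q (t + 1) i tstar) -
        (1 / (N : ℝ)) * ∑ k, Real.log (q (t + 1) k m / q (t + 1) k tstar)| ≤
      (N : ℝ) * B * ∑ s ∈ Finset.range (t + 1), α s *
        (Finset.univ.sup' (Finset.univ_nonempty_iff.mpr ⟨⟨0, hN⟩⟩)
          (fun j : Fin N => |(W ^ (t + 1 - s)) i j - 1 / (N : ℝ)|)) := by
  have hMne : (Finset.univ : Finset (Fin M)).Nonempty := ⟨tstar, Finset.mem_univ _⟩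
  have hNne : (Finset.univ : Finset (Fin N)).Nonempty :=
    Finset.univ_nonempty_iff.mpr ⟨⟨0, hN⟩⟩
  have hMpos : (0 : ℝ) < M := by exact_mod_cast hM
  -- positivity of beliefs
  have hqpos : ∀ t i m, 0 < q t i m := by
    intro t
    induction t with
    | zero => intro i m; rw [hq0]; positivity
    | succ t ih =>
      intro i m
      rw [hq t i m]
      exact div_pos (Real.exp_pos _)
        (Finset.sum_pos (fun θ _ => Real.exp_pos _) hMne)
  have hDpos : ∀ t j, 0 < ∑ θ, ℓ j t θ ^ α t * q t j θ := fun t j =>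
    Finset.sum_pos
      (fun θ _ => mul_pos (Real.rpow_pos_of_pos (hℓ j t θ) _) (hqpos t j θ)) hMne
  -- log of the fractional Bayesian update
  have hblog : ∀ t j m', Real.log (b t j m') =
      α t * Real.log (ℓ j t m') + Real.log (q t j m')
        - Real.log (∑ θ, ℓ j t θ ^ α t * q t j θ) := by
    intro t j m'
    rw [hb, Real.log_div
        (mul_pos (Real.rpow_pos_of_pos (hℓ j t m') _) (hqpos t j m')).ne'
        (hDpos t j).ne',
      Real.log_mul (Real.rpow_pos_of_pos (hℓ j t m') _).ne' (hqpos t j m').ne',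
      Real.log_rpow (hℓ j t m')]
  -- log of the consensus update
  have hqlog : ∀ t i m', Real.log (q (t + 1) i m') =
      (∑ j, W i j * Real.log (b t j m'))
        - Real.log (∑ θ, Real.exp (∑ j, W i j * Real.log (b t j θ))) := by
    intro t i m'
    rw [hq, Real.log_div (Real.exp_pos _).ne'
        (Finset.sum_pos (fun θ _ => Real.exp_pos _) hMne).ne',
      Real.log_exp]
  -- column sums of powers of W are 1
  have hcolpow : ∀ (p : ℕ) (j : Fin N), ∑ i, (W ^ p) i j = 1 := by
    intro p
    induction p with
    | zero =>
      intro j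
      simp [Matrix.one_apply, Finset.sum_ite_eq]
    | succ p ih =>
      intro j
      have : ∀ i, (W ^ (p + 1)) i j = ∑ l, (W ^ p) i l * W l j := by
        intro i; rw [pow_succ, Matrix.mul_apply]
      simp_rw [this]
      rw [Finset.sum_comm]
      have : ∀ l, ∑ i, (W ^ p) i l * W l j = W l j := by
        intro l; rw [← Finset.sum_mul, ih l, one_mul]
      simp_rw [this]
      exact hWcol j
  intro t i m
  -- the log-likelihood increments and log-belief ratios
  set L : ℕ → Fin N → ℝ :=
    fun s j => α s * (Real.log (ℓ j s m) - Real.log (ℓ j s tstar)) with hL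
  set r : ℕ → Fin N → ℝ :=
    fun u k => Real.log (q u k m) - Real.log (q u k tstar) with hr
  have hr0 : ∀ k, r 0 k = 0 := by
    intro k; simp only [hr, hq0 k m, hq0 k tstar, sub_self]
  have hrrec : ∀ s k, r (s + 1) k = ∑ j, W k j * (r s j + L s j) := by
    intro s k
    simp only [hr]
    rw [hqlog s k m, hqlog s k tstar, sub_sub_sub_cancel_right,
      ← Finset.sum_sub_distrib]
    refine Finset.sum_congr rfl fun j _ => ?_
    rw [← mul_sub]
    congr 1
    rw [hblog, hblog]
    simp only [hL]
    ring
  -- closed form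
  have hclosed : ∀ (u : ℕ) (k : Fin N), r (u + 1) k =
      ∑ s ∈ Finset.range (u + 1), ∑ j, (W ^ (u + 1 - s)) k j * L s j := by
    intro u
    induction u with
    | zero =>
      intro k
      rw [hrrec 0 k]
      simp [hr0, pow_one]
    | succ u ih =>
      intro k
      rw [hrrec (u + 1) k]
      simp_rw [mul_add]
      rw [Finset.sum_add_distrib, Finset.sum_range_succ]
      congr 1
      · -- ∑ j, W k j * r (u+1) j = ∑ s ∈ range (u+1), ∑ j, (W ^ (u+2-s)) k j * L s j
        simp_rw [ih, Finset.mul_sum]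
        rw [Finset.sum_comm]
        refine Finset.sum_congr rfl fun s hs => ?_
        rw [Finset.sum_comm]
        refine Finset.sum_congr rfl fun l _ => ?_
        have hsle : u + 1 + 1 - s = (u + 1 - s) + 1 := by
          have := Finset.mem_range.mp hs; omega
        rw [hsle, pow_succ', Matrix.mul_apply, Finset.sum_mul]
        refine Finset.sum_congr rfl fun j _ => ?_
        ring
      · -- last term
        have : u + 1 + 1 - (u + 1) = 1 := by omega
        rw [this, pow_one]
  -- average of r (t+1)
  have havg : (1 / (N : ℝ)) * ∑ k, r (t + 1) k =
      ∑ s ∈ Finset.range (t + 1), (1 / (N : ℝ)) * ∑ j, L s j := by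
    simp_rw [hclosed t]
    rw [Finset.sum_comm, ← Finset.mul_sum]
    congr 1
    refine Finset.sum_congr rfl fun s _ => ?_
    rw [Finset.sum_comm]
    refine Finset.sum_congr rfl fun j _ => ?_
    rw [← Finset.sum_mul, hcolpow, one_mul]
  -- the deviation identity
  have hdev : r (t + 1) i - (1 / (N : ℝ)) * ∑ k, r (t + 1) k =
      ∑ s ∈ Finset.range (t + 1), ∑ j, ((W ^ (t + 1 - s)) i j - 1 / (N : ℝ)) * L s j := by
    rw [hclosed t i, havg, ← Finset.sum_sub_distrib]
    refine Finset.sum_congr rfl fun s _ => ?_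
    rw [Finset.mul_sum, ← Finset.sum_sub_distrib]
    refine Finset.sum_congr rfl fun j _ => ?_
    ring
  -- bound on L
  have hLbound : ∀ s j, |L s j| ≤ α s * B := by
    intro s j
    have h1 : Real.log (ℓ j s m) - Real.log (ℓ j s tstar) =
        Real.log (ℓ j s m / ℓ j s tstar) :=
      (Real.log_div (hℓ j s m).ne' (hℓ j s tstar).ne').symm
    have := hbound j s m tstar
    simp only [hL]
    rw [abs_mul, abs_of_pos (hα s).1, h1]
    exact mul_le_mul_of_nonneg_left this.le (hα s).1.le
  -- rewrite the goal in terms of r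
  have hgoal : ∀ k, Real.log (q (t + 1) k m / q (t + 1) k tstar) = r (t + 1) k := by
    intro k
    rw [Real.log_div (hqpos (t + 1) k m).ne' (hqpos (t + 1) k tstar).ne']
  simp_rw [hgoal]
  rw [hdev]
  calc |∑ s ∈ Finset.range (t + 1), ∑ j, ((W ^ (t + 1 - s)) i j - 1 / (N : ℝ)) * L s j|
      ≤ ∑ s ∈ Finset.range (t + 1), |∑ j, ((W ^ (t + 1 - s)) i j - 1 / (N : ℝ)) * L s j| :=
        Finset.abs_sum_le_sum_abs _ _
    _ ≤ ∑ s ∈ Finset.range (t + 1), ∑ j : Fin N,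
          |((W ^ (t + 1 - s)) i j - 1 / (N : ℝ)) * L s j| := by
        gcongr with s hs
        exact Finset.abs_sum_le_sum_abs _ _
    _ ≤ ∑ s ∈ Finset.range (t + 1), ∑ _j : Fin N,
          (Finset.univ.sup' hNne
            (fun j : Fin N => |(W ^ (t + 1 - s)) i j - 1 / (N : ℝ)|)) * (α s * B) := by
        gcongr with s hs j hj
        rw [abs_mul]
        have hsupnn : (0 : ℝ) ≤ Finset.univ.sup' hNne
            (fun j : Fin N => |(W ^ (t + 1 - s)) i j - 1 / (N : ℝ)|) :=
          le_trans (abs_nonneg _)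
            (Finset.le_sup' (fun j : Fin N => |(W ^ (t + 1 - s)) i j - 1 / (N : ℝ)|)
              (Finset.mem_univ j))
        exact mul_le_mul
          (Finset.le_sup' (fun j : Fin N => |(W ^ (t + 1 - s)) i j - 1 / (N : ℝ)|)
            (Finset.mem_univ j))
          (hLbound s j) (abs_nonneg _) hsupnn
    _ = (N : ℝ) * B * ∑ s ∈ Finset.range (t + 1), α s *
          (Finset.univ.sup' hNne
            (fun j : Fin N => |(W ^ (t + 1 - s)) i j - 1 / (N : ℝ)|)) := by
        rw [Finset.mul_sum]
        refine Finset.sum_congr rfl fun s _ => ?_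
        rw [Finset.sum_const, Finset.card_univ, Fintype.card_fin, nsmul_eq_mul]
        ring
end

section
/- Suppose: (i) there is B > 0 with |log(ℓ_{j,s}(θ')/ℓ_{j,s}(θ''))| < B for all agents j, times s and all θ', θ'' ∈ Θ; (ii) the powers of W satisfy |(W^{τ})_{ij} − 1/N| ≤ C·ρ_w^{τ} for all i,j and τ ≥ 1, for some C > 0 and ρ_w ∈ (0,1); (iii) the stepsizes satisfy 0 < α^{(t)} < 1 and α^{(t)} → 0. Then the agents' log-belief ratios reach consensus: for every agent i and every θ_m ∈ Θ, |log(q_i^{(t+1)}(θ_m)/q_i^{(t+1)}(θ_*)) − (1/N)∑_{k=1}^{N} log(q_k^{(t+1)}(θ_m)/q_k^{(t+1)}(θ_*))| → 0 as t → ∞. -/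
open Filter

theorem conv_aux (ρ : ℝ) (hρ0 : 0 < ρ) (hρ1 : ρ < 1) (a : ℕ → ℝ)
    (ha0 : ∀ s, 0 ≤ a s) (ha1 : ∀ s, a s ≤ 1)
    (hlim : Tendsto a atTop (nhds 0)) :
    Tendsto (fun t => ∑ s ∈ Finset.range (t + 1), ρ ^ (t + 1 - s) * a s)
      atTop (nhds 0) := by
  rw [Metric.tendsto_atTop]
  intro ε hε
  have h1ρ : 0 < 1 - ρ := by linarith
  set ε' : ℝ := ε * (1 - ρ) / 2 with hε'def
  have hε' : 0 < ε' := by positivity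
  obtain ⟨T, hT⟩ := (Metric.tendsto_atTop.mp hlim) ε' hε'
  have hpow : Tendsto (fun n : ℕ => (T : ℝ) * ρ ^ n) atTop (nhds 0) := by
    simpa using (tendsto_pow_atTop_nhds_zero_of_lt_one hρ0.le hρ1).const_mul (T : ℝ)
  have hcomp : Tendsto (fun t : ℕ => (T : ℝ) * ρ ^ (t + 1 - T)) atTop (nhds 0) :=
    hpow.comp (tendsto_atTop_atTop.mpr (fun n => ⟨n + T, fun t ht => by omega⟩))
  obtain ⟨T2, hT2⟩ := (Metric.tendsto_atTop.mp hcomp) (ε / 2) (by positivity)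
  refine ⟨max T T2, fun t ht => ?_⟩
  have hTt : T ≤ t + 1 := by
    have := le_trans (le_max_left T T2) ht; omega
  have hsplit : ∑ s ∈ Finset.range (t+1), ρ^(t+1-s) * a s
      = ∑ s ∈ Finset.Ico 0 T, ρ^(t+1-s)*a s + ∑ s ∈ Finset.Ico T (t+1), ρ^(t+1-s)*a s := by
    rw [Finset.range_eq_Ico, ← Finset.sum_Ico_consecutive _ (Nat.zero_le T) hTt]
  have hpart1 : ∑ s ∈ Finset.Ico 0 T, ρ^(t+1-s)*a s ≤ (T:ℝ) * ρ^(t+1-T) := by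
    calc ∑ s ∈ Finset.Ico 0 T, ρ^(t+1-s)*a s
        ≤ ∑ _s ∈ Finset.Ico 0 T, ρ^(t+1-T) := by
          apply Finset.sum_le_sum
          intro s hs
          simp only [Finset.mem_Ico] at hs
          have h1 : ρ^(t+1-s)*a s ≤ ρ^(t+1-s) * 1 :=
            mul_le_mul_of_nonneg_left (ha1 s) (pow_nonneg hρ0.le _)
          have h2 : ρ^(t+1-s) ≤ ρ^(t+1-T) :=
            pow_le_pow_of_le_one hρ0.le hρ1.le (by omega)
          linarith
      _ = (T:ℝ) * ρ^(t+1-T) := by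
          rw [Finset.sum_const, Nat.card_Ico]; simp [nsmul_eq_mul]
  have hgeom : ∑ s ∈ Finset.range (t+1), ρ^(t+1-s) ≤ 1/(1-ρ) := by
    have hre : ∑ s ∈ Finset.range (t+1), ρ^(t+1-s)
        = ρ * ∑ j ∈ Finset.range (t+1), ρ^j := by
      rw [Finset.mul_sum, ← Finset.sum_range_reflect]
      refine Finset.sum_congr rfl fun j hj => ?_
      simp only [Finset.mem_range] at hj
      rw [← pow_succ']
      congr 1
      omega
    rw [hre]
    have hmul := geom_sum_mul ρ (t+1)
    have hsum : ∑ j ∈ Finset.range (t+1), ρ^j ≤ 1/(1-ρ) := by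
      rw [le_div_iff₀ h1ρ]
      nlinarith [pow_nonneg hρ0.le (t+1)]
    nlinarith [Finset.sum_nonneg (fun j (_ : j ∈ Finset.range (t+1)) => pow_nonneg hρ0.le j)]
  have hpart2 : ∑ s ∈ Finset.Ico T (t+1), ρ^(t+1-s)*a s ≤ ε / 2 := by
    calc ∑ s ∈ Finset.Ico T (t+1), ρ^(t+1-s)*a s
        ≤ ∑ s ∈ Finset.Ico T (t+1), ρ^(t+1-s) * ε' := by
          apply Finset.sum_le_sum
          intro s hs
          simp only [Finset.mem_Ico] at hs
          have := hT s hs.1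
          rw [Real.dist_eq, sub_zero] at this
          have : a s ≤ ε' := le_of_lt (lt_of_le_of_lt (le_abs_self _) this)
          exact mul_le_mul_of_nonneg_left this (pow_nonneg hρ0.le _)
      _ = (∑ s ∈ Finset.Ico T (t+1), ρ^(t+1-s)) * ε' := by rw [Finset.sum_mul]
      _ ≤ (1/(1-ρ)) * ε' := by
          apply mul_le_mul_of_nonneg_right _ hε'.le
          refine le_trans (Finset.sum_le_sum_of_subset_of_nonneg ?_ ?_) hgeom
          · rw [Finset.range_eq_Ico]; exact Finset.Ico_subset_Ico (Nat.zero_le _) le_rfl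
          · intro s _ _; exact pow_nonneg hρ0.le _
      _ = ε / 2 := by rw [hε'def]; field_simp
  have hnn : 0 ≤ ∑ s ∈ Finset.range (t+1), ρ^(t+1-s) * a s :=
    Finset.sum_nonneg fun s _ => mul_nonneg (pow_nonneg hρ0.le _) (ha0 s)
  rw [Real.dist_eq, sub_zero, abs_of_nonneg hnn]
  have hT2' := hT2 t (le_trans (le_max_right T T2) ht)
  rw [Real.dist_eq, sub_zero] at hT2'
  have : (T:ℝ) * ρ^(t+1-T) < ε/2 := lt_of_le_of_lt (le_abs_self _) hT2'
  rw [hsplit]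
  linarith

/-- Under bounded log-likelihood ratios, geometric mixing of the powers
of `W`, and vanishing stepsizes `0 < α t < 1`, the agents' log-belief ratios reach
consensus: each agent's log-belief ratio minus the network average tends to `0`. -/
theorem stmt4 (N M : ℕ) (hN : 0 < N) (hM : 0 < M)
    (tstar : Fin M)                                  -- the true parameter θ_*
    (W : Matrix (Fin N) (Fin N) ℝ)
    (hWnonneg : ∀ i j, 0 ≤ W i j)
    (hWrow : ∀ i, ∑ j, W i j = 1)
    (hWcol : ∀ j, ∑ i, W i j = 1)
    (B : ℝ) (hB : 0 < B)
    (ℓ : Fin N → ℕ → Fin M → ℝ) (hℓ : ∀ j t m, 0 < ℓ j t m)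
    (hbound : ∀ (j : Fin N) (s : ℕ) (θ' θ'' : Fin M),
      |Real.log (ℓ j s θ' / ℓ j s θ'')| < B)
    (C ρw : ℝ) (hC : 0 < C) (hρw : 0 < ρw ∧ ρw < 1)
    (hWpow : ∀ (τ : ℕ), 1 ≤ τ → ∀ i j, |(W ^ τ) i j - 1 / (N : ℝ)| ≤ C * ρw ^ τ)
    (α : ℕ → ℝ) (hα : ∀ t, 0 < α t ∧ α t < 1)
    (hα0 : Tendsto α atTop (nhds 0))
    (q b : ℕ → Fin N → Fin M → ℝ)
    (hq0 : ∀ i m, q 0 i m = 1 / M)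
    (hb : ∀ t i m, b t i m =
      ℓ i t m ^ α t * q t i m / ∑ θ, ℓ i t θ ^ α t * q t i θ)
    (hq : ∀ t i m, q (t + 1) i m =
      Real.exp (∑ j, W i j * Real.log (b t j m)) /
        ∑ θ, Real.exp (∑ j, W i j * Real.log (b t j θ))) :
    ∀ (i : Fin N) (m : Fin M),
      Tendsto (fun t : ℕ =>
        |Real.log (q (t + 1) i m / q (t + 1) i tstar) -
          (1 / (N : ℝ)) * ∑ k, Real.log (q (t + 1) k m / q (t + 1) k tstar)|)
        atTop (nhds 0) := by
  intro i m
  haveI : Nonempty (Fin M) := ⟨⟨0, hM⟩⟩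
  have hMpos : (0:ℝ) < M := by exact_mod_cast hM
  -- positivity of beliefs
  have hqpos : ∀ t j m', 0 < q t j m' := by
    intro t
    induction t with
    | zero => intro j m'; rw [hq0]; positivity
    | succ t ih =>
      intro j m'
      rw [hq]
      exact div_pos (Real.exp_pos _)
        (Finset.sum_pos (fun θ _ => Real.exp_pos _) Finset.univ_nonempty)
  have hbpos : ∀ t j m', 0 < b t j m' := by
    intro t j m'
    rw [hb]
    exact div_pos
      (mul_pos (Real.rpow_pos_of_pos (hℓ j t m') _) (hqpos t j m'))
      (Finset.sum_pos (fun θ _ =>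
        mul_pos (Real.rpow_pos_of_pos (hℓ j t θ) _) (hqpos t j θ)) Finset.univ_nonempty)
  set lam : Fin N → ℕ → ℝ := fun j s => Real.log (ℓ j s m) - Real.log (ℓ j s tstar)
    with hlamdef
  have hlamB : ∀ j s, |lam j s| ≤ B := by
    intro j s
    have h := hbound j s m tstar
    rw [Real.log_div (hℓ j s m).ne' (hℓ j s tstar).ne'] at h
    exact h.le
  set L : ℕ → Fin N → ℝ := fun t k => Real.log (q t k m) - Real.log (q t k tstar)
    with hLdef
  -- log-ratio of b
  have hlogb : ∀ t j, Real.log (b t j m) - Real.log (b t j tstar)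
      = α t * lam j t + L t j := by
    intro t j
    have hZ : 0 < ∑ θ, ℓ j t θ ^ α t * q t j θ :=
      Finset.sum_pos (fun θ _ =>
        mul_pos (Real.rpow_pos_of_pos (hℓ j t θ) _) (hqpos t j θ)) Finset.univ_nonempty
    rw [hb t j m, hb t j tstar,
      Real.log_div (mul_pos (Real.rpow_pos_of_pos (hℓ j t m) _) (hqpos t j m)).ne' hZ.ne',
      Real.log_div (mul_pos (Real.rpow_pos_of_pos (hℓ j t tstar) _) (hqpos t j tstar)).ne' hZ.ne',
      Real.log_mul (Real.rpow_pos_of_pos (hℓ j t m) _).ne' (hqpos t j m).ne',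
      Real.log_mul (Real.rpow_pos_of_pos (hℓ j t tstar) _).ne' (hqpos t j tstar).ne',
      Real.log_rpow (hℓ j t m), Real.log_rpow (hℓ j t tstar)]
    simp only [hlamdef, hLdef]
    ring
  -- one-step recursion for L
  have hLrec : ∀ t k, L (t+1) k = ∑ j, W k j * (α t * lam j t + L t j) := by
    intro t k
    have hZ2 : 0 < ∑ θ, Real.exp (∑ j, W k j * Real.log (b t j θ)) :=
      Finset.sum_pos (fun θ _ => Real.exp_pos _) Finset.univ_nonempty
    have hsub : (∑ j, W k j * Real.log (b t j m)) - (∑ j, W k j * Real.log (b t j tstar))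
        = ∑ j, W k j * (α t * lam j t + L t j) := by
      rw [← Finset.sum_sub_distrib]
      exact Finset.sum_congr rfl (fun j _ => by rw [← mul_sub, hlogb t j])
    simp only [hLdef]
    rw [hq t k m, hq t k tstar,
      Real.log_div (Real.exp_pos _).ne' hZ2.ne',
      Real.log_div (Real.exp_pos _).ne' hZ2.ne',
      Real.log_exp, Real.log_exp]
    linarith [hsub]
  -- column sums of powers of W equal 1
  have hcolpow : ∀ (τ : ℕ) (p : Fin N), ∑ k, (W ^ τ) k p = 1 := by
    intro τ
    induction τ with
    | zero => intro p; simp [Matrix.one_apply]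
    | succ τ ih =>
      intro p
      simp only [pow_succ, Matrix.mul_apply]
      rw [Finset.sum_comm]
      calc ∑ r, ∑ k, (W ^ τ) k r * W r p
          = ∑ r, (∑ k, (W ^ τ) k r) * W r p := by
            refine Finset.sum_congr rfl fun r _ => ?_
            rw [Finset.sum_mul]
        _ = ∑ r, W r p := by simp [ih]
        _ = 1 := hWcol p
  -- unrolled formula for L
  have hLun : ∀ t k, L t k
      = ∑ s ∈ Finset.range t, ∑ j, (W ^ (t - s)) k j * (α s * lam j s) := by
    intro t
    induction t with
    | zero => intro k; simp [hLdef, hq0]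
    | succ t ih =>
      intro k
      rw [hLrec t k]
      have expand : ∑ j, W k j * (α t * lam j t + L t j)
          = (∑ j, W k j * (α t * lam j t)) + ∑ j, W k j * L t j := by
        simp [mul_add, Finset.sum_add_distrib]
      rw [expand]
      have h2 : ∑ j, W k j * L t j
          = ∑ s ∈ Finset.range t, ∑ p, (W ^ (t + 1 - s)) k p * (α s * lam p s) := by
        simp only [ih, Finset.mul_sum]
        rw [Finset.sum_comm]
        refine Finset.sum_congr rfl fun s hs => ?_
        rw [Finset.sum_comm]
        refine Finset.sum_congr rfl fun p _ => ?_
        have hfac : ∑ j, W k j * ((W ^ (t - s)) j p * (α s * lam p s))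
            = (∑ j, W k j * (W ^ (t - s)) j p) * (α s * lam p s) := by
          rw [Finset.sum_mul]
          exact Finset.sum_congr rfl fun j _ => by ring
        rw [hfac]
        congr 1
        have hs' : s < t := Finset.mem_range.mp hs
        have he : t + 1 - s = (t - s) + 1 := by omega
        rw [he, pow_succ', Matrix.mul_apply]
      rw [h2, Finset.sum_range_succ]
      have ht1 : t + 1 - t = 1 := by omega
      rw [ht1, pow_one, add_comm]
  -- sum of L over agents
  have hsumL : ∀ t, ∑ k, L t k = ∑ s ∈ Finset.range t, ∑ p, (α s * lam p s) := by
    intro t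
    simp only [hLun]
    rw [Finset.sum_comm]
    refine Finset.sum_congr rfl fun s _ => ?_
    rw [Finset.sum_comm]
    refine Finset.sum_congr rfl fun p _ => ?_
    rw [← Finset.sum_mul, hcolpow, one_mul]
  -- deviation from average
  have hdev : ∀ t, L (t+1) i - (1/(N:ℝ)) * ∑ k, L (t+1) k
      = ∑ s ∈ Finset.range (t+1), ∑ j, ((W ^ (t+1-s)) i j - 1/(N:ℝ)) * (α s * lam j s) := by
    intro t
    rw [hLun (t+1) i, hsumL (t+1), Finset.mul_sum, ← Finset.sum_sub_distrib]
    refine Finset.sum_congr rfl fun s _ => ?_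
    rw [Finset.mul_sum, ← Finset.sum_sub_distrib]
    refine Finset.sum_congr rfl fun j _ => ?_
    ring
  -- bound on the deviation
  have hboundD : ∀ t, |L (t+1) i - (1/(N:ℝ)) * ∑ k, L (t+1) k|
      ≤ ((N:ℝ) * C * B) * ∑ s ∈ Finset.range (t+1), ρw ^ (t+1-s) * α s := by
    intro t
    rw [hdev t]
    calc |∑ s ∈ Finset.range (t+1), ∑ j, ((W ^ (t+1-s)) i j - 1/(N:ℝ)) * (α s * lam j s)|
        ≤ ∑ s ∈ Finset.range (t+1), ∑ j, |((W ^ (t+1-s)) i j - 1/(N:ℝ)) * (α s * lam j s)| := by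
          refine le_trans (Finset.abs_sum_le_sum_abs _ _) ?_
          exact Finset.sum_le_sum fun s _ => Finset.abs_sum_le_sum_abs _ _
      _ ≤ ∑ s ∈ Finset.range (t+1), ∑ _j : Fin N, (C * ρw ^ (t+1-s)) * (α s * B) := by
          refine Finset.sum_le_sum fun s hs => Finset.sum_le_sum fun j _ => ?_
          have hτ : 1 ≤ t + 1 - s := by
            have := Finset.mem_range.mp hs; omega
          rw [abs_mul, abs_mul]
          have h1 : |(W ^ (t+1-s)) i j - 1/(N:ℝ)| ≤ C * ρw ^ (t+1-s) := hWpow _ hτ i j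
          have h2 : |α s| * |lam j s| ≤ α s * B := by
            rw [abs_of_pos (hα s).1]
            exact mul_le_mul_of_nonneg_left (hlamB j s) (hα s).1.le
          exact mul_le_mul h1 h2 (mul_nonneg (abs_nonneg _) (abs_nonneg _))
            (mul_pos hC (pow_pos hρw.1 _)).le
      _ = ((N:ℝ) * C * B) * ∑ s ∈ Finset.range (t+1), ρw ^ (t+1-s) * α s := by
          rw [Finset.mul_sum]
          refine Finset.sum_congr rfl fun s _ => ?_
          rw [Finset.sum_const, Finset.card_univ, Fintype.card_fin, nsmul_eq_mul]
          ring
  -- conclude by squeezing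
  have hconv := conv_aux ρw hρw.1 hρw.2 α (fun s => (hα s).1.le) (fun s => (hα s).2.le) hα0
  have hlim2 : Tendsto
      (fun t => ((N:ℝ) * C * B) * ∑ s ∈ Finset.range (t+1), ρw ^ (t+1-s) * α s)
      atTop (nhds 0) := by
    simpa using hconv.const_mul ((N:ℝ) * C * B)
  have key : Tendsto (fun t => |L (t+1) i - (1/(N:ℝ)) * ∑ k, L (t+1) k|)
      atTop (nhds 0) :=
    squeeze_zero (fun t => abs_nonneg _) hboundD hlim2
  have heq : (fun t : ℕ =>
      |Real.log (q (t + 1) i m / q (t + 1) i tstar) -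
        (1 / (N : ℝ)) * ∑ k, Real.log (q (t + 1) k m / q (t + 1) k tstar)|)
      = fun t => |L (t+1) i - (1/(N:ℝ)) * ∑ k, L (t+1) k| := by
    funext t
    congr 1
    rw [Real.log_div (hqpos _ _ _).ne' (hqpos _ _ _).ne']
    congr 2
    refine Finset.sum_congr rfl fun k _ => ?_
    rw [Real.log_div (hqpos _ _ _).ne' (hqpos _ _ _).ne']
  rw [heq]
  exact key
end

section
/- Suppose W is doubly stochastic, each J_i(·,θ_m) is μ-strongly convex and L-Lipschitz smooth, each q_i^{(t)} is a probability vector in ℝ^M, q̃ is a fixed probability vector in ℝ^M, and the stepsize satisfies 0 < α^{(t)} < 1/(2L). Then the iterates satisfy |x̄^{(t+1)} − x*(q̃)| ≤ √(1 − α^{(t)}μ(1 − 2Lα^{(t)})) · |x̄^{(t)} − x*(q̃)| + ((α^{(t)})^{1/2} L/√(μN)) · ‖x^{(t)} − 1·x̄^{(t)}‖ + (√2·L·α^{(t)}/√N) · ‖x^{(t)} − 1·x̄^{(t)}‖ + α^{(t)} · (1/N)·∑_{i=1}^{N} ‖q_i^{(t)} − q̃‖ · ‖∇_x 𝐉_i(x*(q̃),θ)‖.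 -/
/-!
Because `W` is column stochastic, the network average performs one perturbed gradient step
`x̄ ↦ x̄ - α (H(x̄) - H(x*)) - α ε - α H(x*)` for `H = (1/N) ∑ᵢ ∑ₘ qᵢ(θₘ) ∇Jᵢ(·, θₘ)`.
Being a convex combination of the `∇Jᵢ(·, θₘ)`, `H` is `μ`-strongly monotone and `L`-Lipschitz,
so the unperturbed step contracts `|x̄ - x*|`. The error `ε` of evaluating each agent's gradient
at `xᵢ` instead of `x̄` is bounded by the consensus error, and `H(x*)` only sees the belief
mismatch `qᵢ - q̃`, since the `q̃`-weighted gradient vanishes at the minimiser `x*`.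
-/

open Finset

section ConvexCombination

variable {ι : Type*} [Fintype ι] {p : ι → ℝ}

theorem le_sum_mul_of_forall_le (hp0 : ∀ k, 0 ≤ p k) (hp1 : ∑ k, p k = 1)
    {v : ι → ℝ} {c : ℝ} (h : ∀ k, c ≤ v k) : c ≤ ∑ k, p k * v k :=
  calc c = ∑ k, p k * c := by rw [← sum_mul, hp1, one_mul]
    _ ≤ ∑ k, p k * v k := sum_le_sum fun k _ => mul_le_mul_of_nonneg_left (h k) (hp0 k)

theorem abs_sum_mul_le_of_forall_abs_le (hp0 : ∀ k, 0 ≤ p k) (hp1 : ∑ k, p k = 1)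
    {v : ι → ℝ} {c : ℝ} (h : ∀ k, |v k| ≤ c) : |∑ k, p k * v k| ≤ c := by
  have hlow := le_sum_mul_of_forall_le hp0 hp1 fun k => neg_le_of_abs_le (h k)
  have hup := le_sum_mul_of_forall_le hp0 hp1 (v := fun k => -v k)
    fun k => neg_le_neg (le_of_abs_le (h k))
  simp only [mul_neg, sum_neg_distrib] at hup
  exact abs_le.mpr ⟨hlow, by linarith⟩

variable {g : ι → ℝ → ℝ}

theorem strongMono_sum_mul (hp0 : ∀ k, 0 ≤ p k) (hp1 : ∑ k, p k = 1) {μ : ℝ}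
    (hg : ∀ k x x', μ * (x' - x) ^ 2 ≤ (g k x' - g k x) * (x' - x)) (x x' : ℝ) :
    μ * (x' - x) ^ 2 ≤ (∑ k, p k * g k x' - ∑ k, p k * g k x) * (x' - x) := by
  have hsum : (∑ k, p k * g k x' - ∑ k, p k * g k x) * (x' - x)
      = ∑ k, p k * ((g k x' - g k x) * (x' - x)) := by
    rw [← sum_sub_distrib, sum_mul]
    exact sum_congr rfl fun k _ => by ring
  exact hsum ▸ le_sum_mul_of_forall_le hp0 hp1 fun k => hg k x x'

theorem lipschitz_sum_mul (hp0 : ∀ k, 0 ≤ p k) (hp1 : ∑ k, p k = 1) {L : ℝ}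
    (hg : ∀ k x x', |g k x' - g k x| ≤ L * |x' - x|) (x x' : ℝ) :
    |∑ k, p k * g k x' - ∑ k, p k * g k x| ≤ L * |x' - x| := by
  rw [← sum_sub_distrib]
  simp only [← mul_sub]
  exact abs_sum_mul_le_of_forall_abs_le hp0 hp1 fun k => hg k x x'

end ConvexCombination

theorem sum_abs_le_sqrt_card_mul_sqrt_sum_sq {ι : Type*} [Fintype ι] (y : ι → ℝ) :
    ∑ i, |y i| ≤ √(Fintype.card ι) * √(∑ i, y i ^ 2) := by
  simpa using Real.sum_mul_le_sqrt_mul_sqrt univ (fun _ => (1 : ℝ)) (fun i => |y i|)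

theorem abs_sum_mul_le_sqrt_mul_sqrt {ι : Type*} (s : Finset ι) (f g : ι → ℝ) :
    |∑ i ∈ s, f i * g i| ≤ √(∑ i ∈ s, f i ^ 2) * √(∑ i ∈ s, g i ^ 2) := by
  rw [← Real.sqrt_mul (sum_nonneg fun i _ => sq_nonneg (f i))]
  exact Real.abs_le_sqrt (sum_mul_sq_le_sq_mul_sq s f g)

theorem sum_sum_mul_eq_sum_of_col_sum_eq_one {n : Type*} [Fintype n] {W : Matrix n n ℝ}
    (hWcol : ∀ j, ∑ i, W i j = 1) (y : n → ℝ) : ∑ i, ∑ j, W i j * y j = ∑ j, y j := by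
  rw [sum_comm]
  exact sum_congr rfl fun j _ => by rw [← sum_mul, hWcol j, one_mul]

theorem sq_gradient_step_le {μ L a D G ε : ℝ} (hμ : 0 < μ) (ha : 0 < a) (h2La : 2 * L * a < 1)
    (hmono : μ * D ^ 2 ≤ G * D) (hlip : |G| ≤ L * |D|) :
    (D - a * (G + ε)) ^ 2 ≤
      (1 - a * μ * (1 - 2 * L * a)) * D ^ 2 + (a / μ + 2 * a ^ 2) * ε ^ 2 := by
  have hGD : G ^ 2 ≤ L * (G * D) := by
    have hGD0 : 0 ≤ G * D := (mul_nonneg hμ.le (sq_nonneg D)).trans hmono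
    calc G ^ 2 = |G| * |G| := by rw [← sq_abs, sq]
      _ ≤ (L * |D|) * |G| := mul_le_mul_of_nonneg_right hlip (abs_nonneg G)
      _ = L * (G * D) := by rw [mul_assoc, ← abs_mul, mul_comm D, abs_of_nonneg hGD0]
  -- Young's inequality: `-2 a ε D ≤ a μ D² + (a / μ) ε²`
  have hyoung : 0 ≤ a * μ * D ^ 2 + a / μ * ε ^ 2 + 2 * a * ε * D := by
    have h : a * μ * D ^ 2 + a / μ * ε ^ 2 + 2 * a * ε * D = a / μ * (ε + μ * D) ^ 2 := by
      field_simp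
      ring
    rw [h]
    positivity
  have hmono' : 0 ≤ 2 * a * (1 - a * L) * (G * D - μ * D ^ 2) :=
    mul_nonneg (mul_nonneg (by positivity) (by linarith)) (by linarith)
  have hlip' : 0 ≤ a ^ 2 * (L * (G * D) - G ^ 2) := mul_nonneg (sq_nonneg a) (by linarith)
  nlinarith [sq_nonneg (a * (G - ε))]

theorem abs_le_mul_add_mul_of_sq_le {v C K d e s k : ℝ} (hs : 0 ≤ s) (hk : 0 ≤ k)
    (hCs : C ≤ s ^ 2) (hKk : K ≤ k ^ 2) (h : v ^ 2 ≤ C * d ^ 2 + K * e ^ 2) :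
    |v| ≤ s * |d| + k * |e| := by
  refine abs_le_of_sq_le_sq ?_ (by positivity)
  have hd : C * d ^ 2 ≤ s ^ 2 * |d| ^ 2 := by
    rw [sq_abs]; exact mul_le_mul_of_nonneg_right hCs (sq_nonneg d)
  have he : K * e ^ 2 ≤ k ^ 2 * |e| ^ 2 := by
    rw [sq_abs]; exact mul_le_mul_of_nonneg_right hKk (sq_nonneg e)
  nlinarith [mul_nonneg (mul_nonneg hs hk) (mul_nonneg (abs_nonneg d) (abs_nonneg e))]

theorem abs_gradient_step_le {μ L a D G ε h E Q : ℝ} (hμ : 0 < μ) (ha : 0 < a)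
    (h2La : 2 * L * a < 1) (hmono : μ * D ^ 2 ≤ G * D) (hlip : |G| ≤ L * |D|)
    (hε : |ε| ≤ E) (hh : |h| ≤ Q) :
    |D - a * (G + ε) - a * h| ≤
      √(1 - a * μ * (1 - 2 * L * a)) * |D| + (√a / √μ + √2 * a) * E + a * Q := by
  have hK : a / μ + 2 * a ^ 2 ≤ (√a / √μ + √2 * a) ^ 2 := by
    have hcross : 0 ≤ 2 * (√a / √μ) * (√2 * a) := by positivity
    rw [add_sq, div_pow, Real.sq_sqrt ha.le, Real.sq_sqrt hμ.le, mul_pow, Real.sq_sqrt two_pos.le]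
    linarith
  -- `√` is `0` on negative reals, so the contraction factor needs no sign condition
  have hstep := abs_le_mul_add_mul_of_sq_le (Real.sqrt_nonneg _) (by positivity)
    (by rw [Real.sq_sqrt']; exact le_max_left _ _) hK
    (sq_gradient_step_le (ε := ε) hμ ha h2La hmono hlip)
  calc |D - a * (G + ε) - a * h| ≤ |D - a * (G + ε)| + |a * h| := abs_sub _ _
    _ ≤ √(1 - a * μ * (1 - 2 * L * a)) * |D| + (√a / √μ + √2 * a) * |ε| + a * |h| := by
      rw [abs_mul, abs_of_pos ha]
      exact add_le_add_left hstep _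
    _ ≤ _ := by gcongr

theorem abs_mean_sub_mean_le {N : ℕ} (hN : 0 < N) {L : ℝ} (hL : 0 ≤ L) {g : Fin N → ℝ → ℝ}
    (hg : ∀ i x x', |g i x' - g i x| ≤ L * |x' - x|) (y : Fin N → ℝ) (c : ℝ) :
    |(1 / (N : ℝ)) * ∑ i, g i (y i) - (1 / (N : ℝ)) * ∑ i, g i c| ≤
      L / √N * √(∑ i, (y i - c) ^ 2) := by
  have hNpos : (0 : ℝ) < N := by exact_mod_cast hN
  calc |(1 / (N : ℝ)) * ∑ i, g i (y i) - (1 / (N : ℝ)) * ∑ i, g i c|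
      = (1 / N) * |∑ i, (g i (y i) - g i c)| := by
        rw [← mul_sub, ← sum_sub_distrib, abs_mul, abs_of_pos (by positivity)]
    _ ≤ (1 / N) * ∑ i, L * |y i - c| := by
        gcongr
        exact (abs_sum_le_sum_abs _ _).trans (sum_le_sum fun i _ => hg i c (y i))
    _ ≤ (1 / N) * (L * (√N * √(∑ i, (y i - c) ^ 2))) := by
        rw [← mul_sum]
        gcongr
        simpa using sum_abs_le_sqrt_card_mul_sqrt_sum_sq fun i => y i - c
    _ = L / √N * √(∑ i, (y i - c) ^ 2) := by
        have hsqrtN : 0 < √(N : ℝ) := Real.sqrt_pos.mpr hNpos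
        field_simp
        rw [Real.sq_sqrt hNpos.le]
        ring

theorem mul_sum_sum_deriv_eq_zero_of_forall_le {ι κ : Type*} [Fintype ι] [Fintype κ] (c : ℝ)
    (w : κ → ℝ) {f : ι → ℝ → κ → ℝ} {x₀ : ℝ}
    (hf : ∀ i k, DifferentiableAt ℝ (fun z => f i z k) x₀)
    (hmin : ∀ z, c * ∑ i, ∑ k, w k * f i x₀ k ≤ c * ∑ i, ∑ k, w k * f i z k) :
    c * ∑ i, ∑ k, w k * deriv (fun z => f i z k) x₀ = 0 :=
  IsLocalMin.hasDerivAt_eq_zero (Filter.Eventually.of_forall hmin) <|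
    (HasDerivAt.fun_sum fun i _ => HasDerivAt.fun_sum fun k _ =>
      (hf i k).hasDerivAt.const_mul (w k)).const_mul c

theorem abs_mul_sum_sum_mul_le {ι κ : Type*} [Fintype ι] [Fintype κ] {c : ℝ} (hc : 0 ≤ c)
    (p : ι → κ → ℝ) (w : κ → ℝ) (d : ι → κ → ℝ) (hw : c * ∑ i, ∑ k, w k * d i k = 0) :
    |c * ∑ i, ∑ k, p i k * d i k| ≤
      c * ∑ i, √(∑ k, (p i k - w k) ^ 2) * √(∑ k, d i k ^ 2) := by
  have hshift : c * ∑ i, ∑ k, p i k * d i k = c * ∑ i, ∑ k, (p i k - w k) * d i k := by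
    simp only [sub_mul, sum_sub_distrib, mul_sub, hw, sub_zero]
  rw [hshift, abs_mul, abs_of_nonneg hc]
  gcongr
  exact (abs_sum_le_sum_abs _ _).trans (sum_le_sum fun i _ => abs_sum_mul_le_sqrt_mul_sqrt _ _ _)

theorem stmt8_general (N M : ℕ) (hN : 0 < N)
    (W : Matrix (Fin N) (Fin N) ℝ)
    (hWcol : ∀ j, ∑ i, W i j = 1)
    (J : Fin N → ℝ → Fin M → ℝ) (μ L : ℝ) (hμ : 0 < μ) (hL : 0 < L)
    (hdiff : ∀ (i : Fin N) (m : Fin M), Differentiable ℝ (fun z => J i z m))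
    (hsc : ∀ (i : Fin N) (m : Fin M) (x x' : ℝ),
      (deriv (fun z => J i z m) x' - deriv (fun z => J i z m) x) * (x' - x) ≥
        μ * (x' - x) ^ 2)
    (hlip : ∀ (i : Fin N) (m : Fin M) (x x' : ℝ),
      |deriv (fun z => J i z m) x' - deriv (fun z => J i z m) x| ≤ L * |x' - x|)
    (α : ℕ → ℝ) (hα : ∀ t, 0 < α t ∧ α t < 1 / (2 * L))
    (q : ℕ → Fin N → Fin M → ℝ)                        -- beliefs (probability vectors)
    (hqprob : ∀ t i, (∀ m, 0 ≤ q t i m) ∧ (∑ m, q t i m = 1))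
    (qt : Fin M → ℝ)                                   -- the fixed probability vector q̃
    (x : ℕ → Fin N → ℝ)                                -- decisions
    (hx : ∀ t i, x (t + 1) i =
      ∑ j, W i j * (x t j - α t * ∑ m, q t j m * deriv (fun z => J j z m) (x t j)))
    (xstar : ℝ)                                        -- x*(q̃)
    (hxstar : ∀ z : ℝ, (1 / (N : ℝ)) * ∑ i, ∑ m, qt m * J i xstar m ≤
      (1 / (N : ℝ)) * ∑ i, ∑ m, qt m * J i z m) :
    ∀ t : ℕ,
      |(1 / (N : ℝ)) * (∑ i, x (t + 1) i) - xstar| ≤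
        Real.sqrt (1 - α t * μ * (1 - 2 * L * α t)) *
          |(1 / (N : ℝ)) * (∑ i, x t i) - xstar| +
        (Real.sqrt (α t) * L / Real.sqrt (μ * N)) *
          Real.sqrt (∑ i, (x t i - (1 / (N : ℝ)) * ∑ k, x t k) ^ 2) +
        (Real.sqrt 2 * L * α t / Real.sqrt N) *
          Real.sqrt (∑ i, (x t i - (1 / (N : ℝ)) * ∑ k, x t k) ^ 2) +
        α t * ((1 / (N : ℝ)) * ∑ i,
          Real.sqrt (∑ m, (q t i m - qt m) ^ 2) *
            Real.sqrt (∑ m, (deriv (fun z => J i z m) xstar) ^ 2)) := by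
  intro t
  obtain ⟨ha, haL⟩ := hα t
  have h2La : 2 * L * α t < 1 := by rwa [lt_div_iff₀ (by positivity), mul_comm] at haL
  set xb := (1 / (N : ℝ)) * ∑ i, x t i
  let g : Fin N → ℝ → ℝ := fun i z => ∑ m, q t i m * deriv (fun z => J i z m) z
  let H : ℝ → ℝ := fun z => (1 / (N : ℝ)) * ∑ i, g i z
  have hg_mono : ∀ i x x', μ * (x' - x) ^ 2 ≤ (g i x' - g i x) * (x' - x) :=
    fun i => strongMono_sum_mul (hqprob t i).1 (hqprob t i).2 (hsc i)
  have hg_lip : ∀ i x x', |g i x' - g i x| ≤ L * |x' - x| :=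
    fun i => lipschitz_sum_mul (hqprob t i).1 (hqprob t i).2 (hlip i)
  have hunif : ∑ _ : Fin N, 1 / (N : ℝ) = 1 := by simp [hN.ne']
  have hH_mono : ∀ x x', μ * (x' - x) ^ 2 ≤ (H x' - H x) * (x' - x) := by
    simpa only [← mul_sum] using strongMono_sum_mul (fun _ => by positivity) hunif hg_mono
  have hH_lip : ∀ x x', |H x' - H x| ≤ L * |x' - x| := by
    simpa only [← mul_sum] using lipschitz_sum_mul (fun _ => by positivity) hunif hg_lip
  have hmean : (1 / (N : ℝ)) * ∑ i, x (t + 1) i = xb - α t * ((1 / N) * ∑ i, g i (x t i)) := by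
    simp only [hx]
    rw [sum_sum_mul_eq_sum_of_col_sum_eq_one hWcol, sum_sub_distrib, ← mul_sum]
    ring
  have hstat := mul_sum_sum_deriv_eq_zero_of_forall_le _ qt
    (fun i m => (hdiff i m).differentiableAt) hxstar
  have hstep := abs_gradient_step_le hμ ha h2La (hH_mono xstar xb) (hH_lip xstar xb)
    (abs_mean_sub_mean_le hN hL.le hg_lip (x t) xb)
    (abs_mul_sum_sum_mul_le (by positivity) (q t) qt _ hstat)
  rw [hmean, Real.sqrt_mul hμ.le]
  calc _ = |(xb - xstar) - α t * ((H xb - H xstar) + ((1 / N) * ∑ i, g i (x t i) - H xb))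
        - α t * H xstar| := by congr 1; ring
    _ ≤ _ := hstep
    _ = _ := by ring

/-- One-step recursion for the optimization error `|x̄^{(t+1)} − x*(q̃)|`
of the distributed gradient descent step with belief-averaged costs. -/
theorem stmt8 (N M : ℕ) (hN : 0 < N) (hM : 0 < M)
    (W : Matrix (Fin N) (Fin N) ℝ)
    (hWnonneg : ∀ i j, 0 ≤ W i j)
    (hWrow : ∀ i, ∑ j, W i j = 1)
    (hWcol : ∀ j, ∑ i, W i j = 1)
    (J : Fin N → ℝ → Fin M → ℝ) (μ L : ℝ) (hμ : 0 < μ) (hL : 0 < L)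
    (hdiff : ∀ (i : Fin N) (m : Fin M), Differentiable ℝ (fun z => J i z m))
    (hsc : ∀ (i : Fin N) (m : Fin M) (x x' : ℝ),
      (deriv (fun z => J i z m) x' - deriv (fun z => J i z m) x) * (x' - x) ≥
        μ * (x' - x) ^ 2)
    (hlip : ∀ (i : Fin N) (m : Fin M) (x x' : ℝ),
      |deriv (fun z => J i z m) x' - deriv (fun z => J i z m) x| ≤ L * |x' - x|)
    (α : ℕ → ℝ) (hα : ∀ t, 0 < α t ∧ α t < 1 / (2 * L))
    (q : ℕ → Fin N → Fin M → ℝ)                        -- beliefs (probability vectors)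
    (hqprob : ∀ t i, (∀ m, 0 ≤ q t i m) ∧ (∑ m, q t i m = 1))
    (qt : Fin M → ℝ)                                   -- the fixed probability vector q̃
    (hqtprob : (∀ m, 0 ≤ qt m) ∧ (∑ m, qt m = 1))
    (x : ℕ → Fin N → ℝ)                                -- decisions
    (hx : ∀ t i, x (t + 1) i =
      ∑ j, W i j * (x t j - α t * ∑ m, q t j m * deriv (fun z => J j z m) (x t j)))
    (xstar : ℝ)                                        -- x*(q̃)
    (hxstar : ∀ z : ℝ, (1 / (N : ℝ)) * ∑ i, ∑ m, qt m * J i xstar m ≤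
      (1 / (N : ℝ)) * ∑ i, ∑ m, qt m * J i z m) :
    ∀ t : ℕ,
      |(1 / (N : ℝ)) * (∑ i, x (t + 1) i) - xstar| ≤
        Real.sqrt (1 - α t * μ * (1 - 2 * L * α t)) *
          |(1 / (N : ℝ)) * (∑ i, x t i) - xstar| +
        (Real.sqrt (α t) * L / Real.sqrt (μ * N)) *
          Real.sqrt (∑ i, (x t i - (1 / (N : ℝ)) * ∑ k, x t k) ^ 2) +
        (Real.sqrt 2 * L * α t / Real.sqrt N) *
          Real.sqrt (∑ i, (x t i - (1 / (N : ℝ)) * ∑ k, x t k) ^ 2) +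
        α t * ((1 / (N : ℝ)) * ∑ i,
          Real.sqrt (∑ m, (q t i m - qt m) ^ 2) *
            Real.sqrt (∑ m, (deriv (fun z => J i z m) xstar) ^ 2)) :=
  stmt8_general N M hN W hWcol J μ L hμ hL hdiff hsc hlip α hα q hqprob qt x hx xstar hxstar
end

section
/- Suppose W is doubly stochastic with spectral norm ρ_w := ‖W − (1/N)·11ᵀ‖₂ satisfying ρ_w ∈ (0,1), each J_i(·,θ_m) is L-Lipschitz smooth, each q_i^{(t)} is a probability vector in ℝ^M, and q̃ is a fixed probability vector in ℝ^M. Then the consensus error satisfies, for every t, ‖x^{(t+1)} − 1·x̄^{(t+1)}‖² ≤ ((3 + ρ_w²)/4)·‖x^{(t)} − 1·x̄^{(t)}‖² + (3ρ_w²(α^{(t)})²/(1 − ρ_w²)) · [2M²L²·‖x^{(t)} − 1·x*(q̃)‖² + 2M·∑_{i=1}^{N} ‖∇_x 𝐉_i(x*(q̃),θ)‖²]. -/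
/-!
Because `W` is doubly stochastic, the new consensus error is `W - 11ᵀ/N` applied to the old
disagreement `(x - x̄1) - α g` (with `g` the weighted local gradients), so its square is at most
`ρ_w²` times that of the disagreement. Young's inequality splits this into the old consensus error
and the gradient term, and `‖g‖²` is bounded by Cauchy–Schwarz over the `M` parameters together
with the Lipschitz continuity of the gradients around `x*`.
-/

open Finset Matrix

section

variable {ι : Type*} [Fintype ι]

lemma sum_sq_mulVec_le_opNorm_sq [DecidableEq ι] (A : Matrix ι ι ℝ) (y : ι → ℝ) :
    ∑ i, (A *ᵥ y) i ^ 2 ≤ ‖toEuclideanCLM (𝕜 := ℝ) A‖ ^ 2 * ∑ j, y j ^ 2 := by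
  have hy : ‖WithLp.toLp 2 y‖ ^ 2 = ∑ j, y j ^ 2 := by
    simp [EuclideanSpace.norm_sq_eq]
  calc ∑ i, (A *ᵥ y) i ^ 2 = ‖toEuclideanCLM (𝕜 := ℝ) A (WithLp.toLp 2 y)‖ ^ 2 := by
        simp [EuclideanSpace.norm_sq_eq, toEuclideanCLM_toLp]
    _ ≤ (‖toEuclideanCLM (𝕜 := ℝ) A‖ * ‖WithLp.toLp 2 y‖) ^ 2 := by
        gcongr; exact (toEuclideanCLM (𝕜 := ℝ) A).le_opNorm _
    _ = ‖toEuclideanCLM (𝕜 := ℝ) A‖ ^ 2 * ∑ j, y j ^ 2 := by rw [mul_pow, hy]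

lemma mulVec_sub_average_eq {W : Matrix ι ι ℝ} (hrow : ∀ i, ∑ j, W i j = 1)
    (hcol : ∀ j, ∑ i, W i j = 1) (z : ι → ℝ) (c : ℝ) (i : ι) :
    (W *ᵥ z) i - (1 / Fintype.card ι) * ∑ k, (W *ᵥ z) k =
      ((W - of fun _ _ => (1 : ℝ) / Fintype.card ι) *ᵥ fun j => z j - c) i := by
  have hcard : (Fintype.card ι : ℝ) ≠ 0 := by
    have : Nonempty ι := ⟨i⟩
    positivity
  have hsum : ∑ k, (W *ᵥ z) k = ∑ j, z j := by
    simp only [mulVec, dotProduct]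
    rw [sum_comm]
    exact sum_congr rfl fun j _ => by rw [← sum_mul, hcol j, one_mul]
  rw [hsum]
  simp only [mulVec, dotProduct, Matrix.sub_apply, of_apply, sub_mul, mul_sub, sum_sub_distrib,
    ← sum_mul, ← mul_sum, hrow i, sum_const, card_univ, nsmul_eq_mul]
  field_simp
  ring

lemma mul_sq_sub_le {r : ℝ} (hr0 : 0 ≤ r) (hr1 : r < 1) (a b : ℝ) :
    r * (a - b) ^ 2 ≤ (3 + r) / 4 * a ^ 2 + 3 * r / (1 - r) * b ^ 2 := by
  have hr : 0 < 1 - r := by linarith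
  -- Young's inequality with weight `(1 - r) / (2 r)`; as a perfect square it also covers `r = 0`.
  have hsharp : r * (a - b) ^ 2 ≤ (1 + r) / 2 * a ^ 2 + r * (1 + r) / (1 - r) * b ^ 2 := by
    have hgap : (1 + r) / 2 * a ^ 2 + r * (1 + r) / (1 - r) * b ^ 2 - r * (a - b) ^ 2 =
        (1 - r) / 2 * (a + 2 * r / (1 - r) * b) ^ 2 := by
      field_simp
      ring
    have : 0 ≤ (1 - r) / 2 * (a + 2 * r / (1 - r) * b) ^ 2 := by positivity
    linarith
  have hcoef : r * (1 + r) / (1 - r) ≤ 3 * r / (1 - r) := by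
    rw [div_le_div_iff_of_pos_right hr]
    nlinarith
  nlinarith [sq_nonneg a, sq_nonneg b]

lemma mul_sum_sq_sub_le {r : ℝ} (hr0 : 0 ≤ r) (hr1 : r < 1) (a b : ι → ℝ) :
    r * ∑ j, (a j - b j) ^ 2 ≤
      (3 + r) / 4 * ∑ j, a j ^ 2 + 3 * r / (1 - r) * ∑ j, b j ^ 2 := by
  rw [mul_sum, mul_sum, mul_sum, ← sum_add_distrib]
  exact sum_le_sum fun j _ => mul_sq_sub_le hr0 hr1 (a j) (b j)

end

section

variable {κ : Type*} [Fintype κ]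

lemma sq_sum_mul_le_card_mul_sum_sq {q : κ → ℝ} (hq0 : ∀ m, 0 ≤ q m) (hq1 : ∑ m, q m = 1)
    (D : κ → ℝ) : (∑ m, q m * D m) ^ 2 ≤ Fintype.card κ * ∑ m, D m ^ 2 := by
  have hq_le_one : ∀ m, q m ≤ 1 := fun m =>
    hq1 ▸ single_le_sum (fun k _ => hq0 k) (mem_univ m)
  calc (∑ m, q m * D m) ^ 2 ≤ Fintype.card κ * ∑ m, (q m * D m) ^ 2 :=
        sq_sum_le_card_mul_sum_sq
    _ ≤ Fintype.card κ * ∑ m, D m ^ 2 := by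
        gcongr _ * ?_
        refine sum_le_sum fun m _ => ?_
        rw [mul_pow]
        exact mul_le_of_le_one_left (sq_nonneg _) (pow_le_one₀ (hq0 m) (hq_le_one m))

lemma sum_sq_le_of_abs_sub_le {D d : κ → ℝ} {K : ℝ} (h : ∀ m, |D m - d m| ≤ K) :
    ∑ m, D m ^ 2 ≤ 2 * Fintype.card κ * K ^ 2 + 2 * ∑ m, d m ^ 2 := by
  have hpt : ∀ m, D m ^ 2 ≤ 2 * (K ^ 2 + d m ^ 2) := fun m => by
    calc D m ^ 2 = ((D m - d m) + d m) ^ 2 := by ring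
      _ ≤ 2 * ((D m - d m) ^ 2 + d m ^ 2) := add_sq_le
      _ ≤ 2 * (K ^ 2 + d m ^ 2) := by
          rw [← sq_abs (D m - d m)]
          gcongr
          exact h m
  calc ∑ m, D m ^ 2 ≤ ∑ m, 2 * (K ^ 2 + d m ^ 2) := sum_le_sum fun m _ => hpt m
    _ = 2 * Fintype.card κ * K ^ 2 + 2 * ∑ m, d m ^ 2 := by
        simp only [← mul_sum, sum_add_distrib, sum_const, card_univ, nsmul_eq_mul]
        ring

lemma sq_sum_mul_deriv_le (f : κ → ℝ → ℝ) {L : ℝ}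
    (hlip : ∀ m x x', |deriv (f m) x' - deriv (f m) x| ≤ L * |x' - x|)
    {q : κ → ℝ} (hq0 : ∀ m, 0 ≤ q m) (hq1 : ∑ m, q m = 1) (x y : ℝ) :
    (∑ m, q m * deriv (f m) x) ^ 2 ≤
      2 * Fintype.card κ ^ 2 * L ^ 2 * (x - y) ^ 2 +
        2 * Fintype.card κ * ∑ m, deriv (f m) y ^ 2 := by
  calc (∑ m, q m * deriv (f m) x) ^ 2 ≤ Fintype.card κ * ∑ m, deriv (f m) x ^ 2 :=
        sq_sum_mul_le_card_mul_sum_sq hq0 hq1 _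
    _ ≤ Fintype.card κ *
          (2 * Fintype.card κ * (L * |x - y|) ^ 2 + 2 * ∑ m, deriv (f m) y ^ 2) := by
        gcongr
        exact sum_sq_le_of_abs_sub_le fun m => hlip m y x
    _ = _ := by rw [mul_pow, sq_abs]; ring

end

theorem stmt9_general (N M : ℕ)
    (W : Matrix (Fin N) (Fin N) ℝ)
    (hWrow : ∀ i, ∑ j, W i j = 1)
    (hWcol : ∀ j, ∑ i, W i j = 1)
    (ρw : ℝ)
    (hρw : ρw = ‖Matrix.toEuclideanCLM (𝕜 := ℝ)
      (W - (Matrix.of (fun _ _ => (1 : ℝ) / N) : Matrix (Fin N) (Fin N) ℝ))‖)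
    (hρw01 : 0 < ρw ∧ ρw < 1)
    (J : Fin N → ℝ → Fin M → ℝ) (L : ℝ)
    (hlip : ∀ (i : Fin N) (m : Fin M) (x x' : ℝ),
      |deriv (fun z => J i z m) x' - deriv (fun z => J i z m) x| ≤ L * |x' - x|)
    (α : ℕ → ℝ)
    (q : ℕ → Fin N → Fin M → ℝ)                        -- beliefs (probability vectors)
    (hqprob : ∀ t i, (∀ m, 0 ≤ q t i m) ∧ (∑ m, q t i m = 1))
    (x : ℕ → Fin N → ℝ)                                -- decisions
    (hx : ∀ t i, x (t + 1) i =
      ∑ j, W i j * (x t j - α t * ∑ m, q t j m * deriv (fun z => J j z m) (x t j)))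
    (xstar : ℝ) :                                       -- x*(q̃)
    ∀ t : ℕ,
      ∑ i, (x (t + 1) i - (1 / (N : ℝ)) * ∑ k, x (t + 1) k) ^ 2 ≤
        ((3 + ρw ^ 2) / 4) * ∑ i, (x t i - (1 / (N : ℝ)) * ∑ k, x t k) ^ 2 +
        (3 * ρw ^ 2 * (α t) ^ 2 / (1 - ρw ^ 2)) *
          (2 * (M : ℝ) ^ 2 * L ^ 2 * (∑ i, (x t i - xstar) ^ 2) +
            2 * (M : ℝ) * ∑ i, ∑ m, (deriv (fun z => J i z m) xstar) ^ 2) := by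
  intro t
  set g : Fin N → ℝ := fun j => ∑ m, q t j m * deriv (fun z => J j z m) (x t j)
  set xb : ℝ := 1 / (N : ℝ) * ∑ k, x t k
  have hρ : ρw ^ 2 < 1 := pow_lt_one₀ hρw01.1.le hρw01.2 two_ne_zero
  have hconsensus : ∀ i, x (t + 1) i - 1 / (N : ℝ) * ∑ k, x (t + 1) k =
      ((W - of fun _ _ => (1 : ℝ) / N) *ᵥ fun j => (x t j - xb) - α t * g j) i := by
    intro i
    have hstep : x (t + 1) = W *ᵥ fun j => x t j - α t * g j := funext (hx t)
    have h := mulVec_sub_average_eq hWrow hWcol (fun j => x t j - α t * g j) xb i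
    rw [Fintype.card_fin] at h
    simp only [hstep, h, sub_right_comm]
  have hgrad : ∑ j, g j ^ 2 ≤
      2 * (M : ℝ) ^ 2 * L ^ 2 * (∑ i, (x t i - xstar) ^ 2) +
        2 * (M : ℝ) * ∑ i, ∑ m, (deriv (fun z => J i z m) xstar) ^ 2 := by
    rw [mul_sum, mul_sum, ← sum_add_distrib]
    refine sum_le_sum fun i _ => ?_
    simpa using sq_sum_mul_deriv_le (fun m z => J i z m) (hlip i) (hqprob t i).1
      (hqprob t i).2 (x t i) xstar
  calc ∑ i, (x (t + 1) i - (1 / (N : ℝ)) * ∑ k, x (t + 1) k) ^ 2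
      = ∑ i, ((W - of fun _ _ => (1 : ℝ) / N) *ᵥ fun j => (x t j - xb) - α t * g j) i ^ 2 := by
        simp only [hconsensus]
    _ ≤ ρw ^ 2 * ∑ j, ((x t j - xb) - α t * g j) ^ 2 := hρw ▸ sum_sq_mulVec_le_opNorm_sq _ _
    _ ≤ (3 + ρw ^ 2) / 4 * ∑ j, (x t j - xb) ^ 2 +
          3 * ρw ^ 2 / (1 - ρw ^ 2) * ∑ j, (α t * g j) ^ 2 :=
        mul_sum_sq_sub_le (sq_nonneg ρw) hρ _ _
    _ ≤ _ := by
        have : 0 ≤ 3 * ρw ^ 2 / (1 - ρw ^ 2) := div_nonneg (by positivity) (by linarith)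
        simp only [mul_pow, ← mul_sum, mul_div_right_comm _ (α t ^ 2), mul_assoc _ (α t ^ 2)]
        gcongr

/-- One-step recursion for the consensus error
`‖x^{(t+1)} − 1·x̄^{(t+1)}‖²` of the distributed gradient descent step, where
`ρ_w = ‖W − (1/N)·11ᵀ‖₂ ∈ (0,1)` is the spectral norm. -/
theorem stmt9 (N M : ℕ) (hN : 0 < N) (hM : 0 < M)
    (W : Matrix (Fin N) (Fin N) ℝ)
    (hWnonneg : ∀ i j, 0 ≤ W i j)
    (hWrow : ∀ i, ∑ j, W i j = 1)
    (hWcol : ∀ j, ∑ i, W i j = 1)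
    (ρw : ℝ)
    (hρw : ρw = ‖Matrix.toEuclideanCLM (𝕜 := ℝ)
      (W - (Matrix.of (fun _ _ => (1 : ℝ) / N) : Matrix (Fin N) (Fin N) ℝ))‖)
    (hρw01 : 0 < ρw ∧ ρw < 1)
    (J : Fin N → ℝ → Fin M → ℝ) (L : ℝ) (hL : 0 < L)
    (hdiff : ∀ (i : Fin N) (m : Fin M), Differentiable ℝ (fun z => J i z m))
    (hlip : ∀ (i : Fin N) (m : Fin M) (x x' : ℝ),
      |deriv (fun z => J i z m) x' - deriv (fun z => J i z m) x| ≤ L * |x' - x|)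
    (α : ℕ → ℝ)
    (q : ℕ → Fin N → Fin M → ℝ)                        -- beliefs (probability vectors)
    (hqprob : ∀ t i, (∀ m, 0 ≤ q t i m) ∧ (∑ m, q t i m = 1))
    (qt : Fin M → ℝ)                                   -- the fixed probability vector q̃
    (hqtprob : (∀ m, 0 ≤ qt m) ∧ (∑ m, qt m = 1))
    (x : ℕ → Fin N → ℝ)                                -- decisions
    (hx : ∀ t i, x (t + 1) i =
      ∑ j, W i j * (x t j - α t * ∑ m, q t j m * deriv (fun z => J j z m) (x t j)))
    (xstar : ℝ)                                        -- x*(q̃)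
    (hxstar : ∀ z : ℝ, (1 / (N : ℝ)) * ∑ i, ∑ m, qt m * J i xstar m ≤
      (1 / (N : ℝ)) * ∑ i, ∑ m, qt m * J i z m) :
    ∀ t : ℕ,
      ∑ i, (x (t + 1) i - (1 / (N : ℝ)) * ∑ k, x (t + 1) k) ^ 2 ≤
        ((3 + ρw ^ 2) / 4) * ∑ i, (x t i - (1 / (N : ℝ)) * ∑ k, x t k) ^ 2 +
        (3 * ρw ^ 2 * (α t) ^ 2 / (1 - ρw ^ 2)) *
          (2 * (M : ℝ) ^ 2 * L ^ 2 * (∑ i, (x t i - xstar) ^ 2) +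
            2 * (M : ℝ) * ∑ i, ∑ m, (deriv (fun z => J i z m) xstar) ^ 2) :=
  stmt9_general N M W hWrow hWcol ρw hρw hρw01 J L hlip α q hqprob x hx xstar
end

section
/- Suppose W is doubly stochastic, each J_i(·,θ_m) is μ-strongly convex and L-Lipschitz smooth, each q_i^{(t)} is a probability vector in ℝ^M, q̃ is a fixed probability vector in ℝ^M, and the stepsizes α^{(t)} > 0 are nonincreasing with α^{(t)} → 0 (for instance α^{(t)} of order O(1/t)). Then the iterates are uniformly bounded: there exists a constant X̂ such that for all t ≥ 0, ‖x^{(t)} − 1·x*(q̃)‖² ≤ X̂. -/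
open Filter

/-- With nonincreasing vanishing stepsizes, the iterates of the
distributed gradient descent step are uniformly bounded:
`‖x^{(t)} − 1·x*(q̃)‖² ≤ X̂` for all `t`. -/
theorem stmt10 (N M : ℕ) (hN : 0 < N) (hM : 0 < M)
    (W : Matrix (Fin N) (Fin N) ℝ)
    (hWnonneg : ∀ i j, 0 ≤ W i j)
    (hWrow : ∀ i, ∑ j, W i j = 1)
    (hWcol : ∀ j, ∑ i, W i j = 1)
    (J : Fin N → ℝ → Fin M → ℝ) (μ L : ℝ) (hμ : 0 < μ) (hL : 0 < L)
    (hdiff : ∀ (i : Fin N) (m : Fin M), Differentiable ℝ (fun z => J i z m))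
    (hsc : ∀ (i : Fin N) (m : Fin M) (x x' : ℝ),
      (deriv (fun z => J i z m) x' - deriv (fun z => J i z m) x) * (x' - x) ≥
        μ * (x' - x) ^ 2)
    (hlip : ∀ (i : Fin N) (m : Fin M) (x x' : ℝ),
      |deriv (fun z => J i z m) x' - deriv (fun z => J i z m) x| ≤ L * |x' - x|)
    (α : ℕ → ℝ) (hαpos : ∀ t, 0 < α t) (hαmono : Antitone α)
    (hα0 : Tendsto α atTop (nhds 0))
    (q : ℕ → Fin N → Fin M → ℝ)                        -- beliefs (probability vectors)
    (hqprob : ∀ t i, (∀ m, 0 ≤ q t i m) ∧ (∑ m, q t i m = 1))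
    (qt : Fin M → ℝ)                                   -- the fixed probability vector q̃
    (hqtprob : (∀ m, 0 ≤ qt m) ∧ (∑ m, qt m = 1))
    (x : ℕ → Fin N → ℝ)                                -- decisions
    (hx : ∀ t i, x (t + 1) i =
      ∑ j, W i j * (x t j - α t * ∑ m, q t j m * deriv (fun z => J j z m) (x t j)))
    (xstar : ℝ)                                        -- x*(q̃)
    (hxstar : ∀ z : ℝ, (1 / (N : ℝ)) * ∑ i, ∑ m, qt m * J i xstar m ≤
      (1 / (N : ℝ)) * ∑ i, ∑ m, qt m * J i z m) :
    ∃ Xhat : ℝ, ∀ t : ℕ, ∑ i, (x t i - xstar) ^ 2 ≤ Xhat := by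
  classical
  set g : ℕ → Fin N → ℝ → ℝ :=
    fun t j z => ∑ m, q t j m * deriv (fun w => J j w m) z with hg
  have hq0 : ∀ t i m, 0 ≤ q t i m := fun t i => (hqprob t i).1
  have hq1 : ∀ t i m, q t i m ≤ 1 := by
    intro t i m
    calc q t i m ≤ ∑ m', q t i m' :=
          Finset.single_le_sum (fun m' _ => hq0 t i m') (Finset.mem_univ m)
      _ = 1 := (hqprob t i).2
  have hxg : ∀ t i, x (t + 1) i = ∑ j, W i j * (x t j - α t * g t j (x t j)) := by
    intro t i
    rw [hx t i]
  -- μ ≤ L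
  have hμL : μ ≤ L := by
    have h1 := hsc ⟨0, hN⟩ ⟨0, hM⟩ 0 1
    have h2 := le_of_abs_le (hlip ⟨0, hN⟩ ⟨0, hM⟩ 0 1)
    rw [sub_zero, mul_one, one_pow, mul_one] at h1
    rw [sub_zero, abs_one, mul_one] at h2
    linarith
  have hgdiff : ∀ t j a b, g t j b - g t j a
      = ∑ m, q t j m * (deriv (fun w => J j w m) b - deriv (fun w => J j w m) a) := by
    intro t j a b
    simp only [hg, ← Finset.sum_sub_distrib, mul_sub]
  -- strong monotonicity of g
  have hmono : ∀ t j a b, μ * (b - a) ^ 2 ≤ (g t j b - g t j a) * (b - a) := by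
    intro t j a b
    rw [hgdiff, Finset.sum_mul]
    calc μ * (b - a) ^ 2 = ∑ m, q t j m * (μ * (b - a) ^ 2) := by
          rw [← Finset.sum_mul, (hqprob t j).2, one_mul]
      _ ≤ ∑ m, q t j m * (deriv (fun w => J j w m) b - deriv (fun w => J j w m) a) * (b - a) := by
          apply Finset.sum_le_sum; intro m _
          have h1 := hsc j m a b
          have h2 := hq0 t j m
          nlinarith
  -- Lipschitz continuity of g
  have hlipg : ∀ t j a b, |g t j b - g t j a| ≤ L * |b - a| := by
    intro t j a b
    rw [hgdiff]
    calc |∑ m, q t j m * (deriv (fun w => J j w m) b - deriv (fun w => J j w m) a)|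
        ≤ ∑ m, |q t j m * (deriv (fun w => J j w m) b - deriv (fun w => J j w m) a)| :=
          Finset.abs_sum_le_sum_abs _ _
      _ ≤ ∑ m, q t j m * (L * |b - a|) := by
          apply Finset.sum_le_sum; intro m _
          rw [abs_mul, abs_of_nonneg (hq0 t j m)]
          exact mul_le_mul_of_nonneg_left (hlip j m a b) (hq0 t j m)
      _ = L * |b - a| := by rw [← Finset.sum_mul, (hqprob t j).2, one_mul]
  -- uniform bound on gradients at xstar
  set G : ℝ := ∑ j, ∑ m, |deriv (fun w => J j w m) xstar| with hGdef
  have hGnonneg : 0 ≤ G :=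
    Finset.sum_nonneg fun j _ => Finset.sum_nonneg fun m _ => abs_nonneg _
  have hGbound : ∀ t j, |g t j xstar| ≤ G := by
    intro t j
    calc |g t j xstar| ≤ ∑ m, |q t j m * deriv (fun w => J j w m) xstar| :=
          Finset.abs_sum_le_sum_abs _ _
      _ ≤ ∑ m, |deriv (fun w => J j w m) xstar| := by
          apply Finset.sum_le_sum; intro m _
          rw [abs_mul, abs_of_nonneg (hq0 t j m)]
          calc q t j m * |deriv (fun w => J j w m) xstar|
              ≤ 1 * |deriv (fun w => J j w m) xstar| :=
                mul_le_mul_of_nonneg_right (hq1 t j m) (abs_nonneg _)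
            _ = _ := one_mul _
      _ ≤ G := Finset.single_le_sum
          (f := fun j => ∑ m, |deriv (fun w => J j w m) xstar|)
          (fun j' _ => Finset.sum_nonneg fun m _ => abs_nonneg _) (Finset.mem_univ j)
  -- small stepsize facts
  have hαμ1 : ∀ t, α t ≤ μ / L ^ 2 → α t * μ ≤ 1 := by
    intro t hs
    have h3 : α t * L ^ 2 ≤ μ := (le_div_iff₀ (by positivity)).1 hs
    nlinarith [hαpos t, mul_le_mul_of_nonneg_left h3 hμ.le, mul_pos hL hL,
      sq_nonneg (L - μ), mul_pos (hαpos t) hμ]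
  -- contraction estimate
  have hcontr : ∀ t j a b, α t ≤ μ / L ^ 2 →
      |(a - α t * g t j a) - (b - α t * g t j b)| ≤ (1 - α t * μ / 2) * |a - b| := by
    intro t j a b hs
    have hαt := hαpos t
    have h3 : α t * L ^ 2 ≤ μ := (le_div_iff₀ (by positivity)).1 hs
    have h5 : α t * μ ≤ 1 := hαμ1 t hs
    have h1 := hmono t j b a
    have hlp := hlipg t j b a
    have h2 : (g t j a - g t j b) ^ 2 ≤ L ^ 2 * (a - b) ^ 2 := by
      have := pow_le_pow_left₀ (abs_nonneg (g t j a - g t j b)) hlp 2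
      rw [sq_abs, mul_pow, sq_abs] at this
      exact this
    have hRnn : 0 ≤ (1 - α t * μ / 2) * |a - b| := by
      apply mul_nonneg _ (abs_nonneg _); linarith
    refine abs_le.mpr (abs_le_of_sq_le_sq' ?_ hRnn)
    rw [mul_pow, sq_abs]
    nlinarith [mul_le_mul_of_nonneg_left h1 (by linarith : (0:ℝ) ≤ 2 * α t),
      mul_le_mul_of_nonneg_left h2 (sq_nonneg (α t)),
      mul_le_mul_of_nonneg_right h3 (mul_nonneg hαt.le (sq_nonneg (a - b))),
      sq_nonneg (α t * μ * (a - b))]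
  -- time after which stepsizes are small
  obtain ⟨T, hT⟩ : ∃ T, ∀ t, T ≤ t → α t ≤ μ / L ^ 2 := by
    have h := hα0.eventually_lt_const (show (0:ℝ) < μ / L ^ 2 by positivity)
    rw [eventually_atTop] at h
    obtain ⟨T, hT⟩ := h
    exact ⟨T, fun t ht => (hT t ht).le⟩
  have huniv : (Finset.univ : Finset (Fin N)).Nonempty := ⟨⟨0, hN⟩, Finset.mem_univ _⟩
  set B : ℝ := max ((Finset.univ : Finset (Fin N)).sup' huniv (fun j => |x T j - xstar|))
      (2 * G / μ) with hBdef
  have hB2 : 2 * G / μ ≤ B := le_max_right _ _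
  have hBnn : 0 ≤ B := le_trans (by positivity) hB2
  have hGB : G ≤ μ * B / 2 := by
    rw [div_le_iff₀ hμ] at hB2; nlinarith
  -- the key invariant
  have key : ∀ s, ∀ j, |x (T + s) j - xstar| ≤ B := by
    intro s
    induction s with
    | zero =>
      intro j
      exact le_trans (Finset.le_sup' (fun j => |x T j - xstar|) (Finset.mem_univ j))
        (le_max_left _ _)
    | succ s ih =>
      intro i
      have hαs : α (T + s) ≤ μ / L ^ 2 := hT (T + s) (Nat.le_add_right T s)
      have hαt := hαpos (T + s)
      have h5 : α (T + s) * μ ≤ 1 := hαμ1 (T + s) hαs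
      have hyb : ∀ j, |(x (T + s) j - α (T + s) * g (T + s) j (x (T + s) j)) - xstar| ≤ B := by
        intro j
        have hc := hcontr (T + s) j (x (T + s) j) xstar hαs
        have hdecomp : (x (T + s) j - α (T + s) * g (T + s) j (x (T + s) j)) - xstar
            = ((x (T + s) j - α (T + s) * g (T + s) j (x (T + s) j))
                - (xstar - α (T + s) * g (T + s) j xstar))
              + (-(α (T + s) * g (T + s) j xstar)) := by ring
        calc |(x (T + s) j - α (T + s) * g (T + s) j (x (T + s) j)) - xstar|
            ≤ |(x (T + s) j - α (T + s) * g (T + s) j (x (T + s) j))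
                - (xstar - α (T + s) * g (T + s) j xstar)|
              + |α (T + s) * g (T + s) j xstar| := by
              rw [hdecomp]
              exact (abs_add_le _ _).trans (by rw [abs_neg])
          _ ≤ (1 - α (T + s) * μ / 2) * |x (T + s) j - xstar| + α (T + s) * G := by
              refine add_le_add hc ?_
              rw [abs_mul, abs_of_pos hαt]
              exact mul_le_mul_of_nonneg_left (hGbound (T + s) j) hαt.le
          _ ≤ (1 - α (T + s) * μ / 2) * B + α (T + s) * G :=
              add_le_add (mul_le_mul_of_nonneg_left (ih j) (by linarith)) le_rfl
          _ ≤ B := by nlinarith [mul_le_mul_of_nonneg_left hGB hαt.le]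
      have hsplit : x (T + s + 1) i - xstar
          = ∑ j, W i j * ((x (T + s) j - α (T + s) * g (T + s) j (x (T + s) j)) - xstar) := by
        rw [hxg (T + s) i]
        simp only [mul_sub, Finset.sum_sub_distrib, ← Finset.sum_mul, hWrow i, one_mul]
      have : T + (s + 1) = T + s + 1 := by ring
      rw [this, hsplit]
      calc |∑ j, W i j * ((x (T + s) j - α (T + s) * g (T + s) j (x (T + s) j)) - xstar)|
          ≤ ∑ j, |W i j * ((x (T + s) j - α (T + s) * g (T + s) j (x (T + s) j)) - xstar)| :=
            Finset.abs_sum_le_sum_abs _ _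
        _ ≤ ∑ j, W i j * B := by
            apply Finset.sum_le_sum; intro j _
            rw [abs_mul, abs_of_nonneg (hWnonneg i j)]
            exact mul_le_mul_of_nonneg_left (hyb j) (hWnonneg i j)
        _ = B := by rw [← Finset.sum_mul, hWrow i, one_mul]
  -- assemble the final bound
  have hrangene : (Finset.range (T + 1)).Nonempty := ⟨0, Finset.mem_range.2 (Nat.succ_pos T)⟩
  refine ⟨max ((Finset.range (T + 1)).sup' hrangene (fun t => ∑ i, (x t i - xstar) ^ 2))
      ((N : ℝ) * B ^ 2), fun t => ?_⟩
  rcases le_or_gt t T with ht | ht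
  · exact le_trans (Finset.le_sup' (fun t => ∑ i, (x t i - xstar) ^ 2)
      (Finset.mem_range.2 (Nat.lt_succ_of_le ht))) (le_max_left _ _)
  · refine le_trans ?_ (le_max_right _ _)
    obtain ⟨s, rfl⟩ : ∃ s, t = T + s := ⟨t - T, by omega⟩
    calc ∑ i, (x (T + s) i - xstar) ^ 2 ≤ ∑ _i : Fin N, B ^ 2 := by
          apply Finset.sum_le_sum; intro i _
          have := key s i
          nlinarith [abs_nonneg (x (T + s) i - xstar), sq_abs (x (T + s) i - xstar)]
      _ = (N : ℝ) * B ^ 2 := by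
          simp [Finset.sum_const, Finset.card_univ, nsmul_eq_mul]
end
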